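/- arXiv:1406.6770 — 4 statements merged into one kernel-verified Lean document; each statement's English description precedes it below -/
import Mathlib

section
/- Let (S,d) be a metric space with remote point ∞ and let φ be a d-Möbius homeomorphism of S ∪ {∞} fixing ∞. Then φ restricted to S is a similarity: there exists K > 0 such that d(φ(p),φ(q)) = K·d(p,q) for all p,q ∈ S. -/
open OnePoint

/-- Extended distance on `S ∪ {∞}` used in the metric cross-ratio: a pair involving the
remote point `∞` contributes the factor `1` (the `+∞` terms cancel in the cross-ratio). -/
noncomputable def extD {S : Type*} [MetricSpace S] : OnePoint S → OnePoint S → ℝ :=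
  fun x y => match x, y with
  | Option.some p, Option.some q => dist p q
  | _, _ => 1

/-- The metric cross-ratio `|X^d|(p₁,p₂,p₃,p₄) = (d(p₄,p₂)/d(p₄,p₁))·(d(p₃,p₁)/d(p₃,p₂))`. -/
noncomputable def crossRatio {S : Type*} [MetricSpace S] (p₁ p₂ p₃ p₄ : OnePoint S) : ℝ :=
  (extD p₄ p₂ / extD p₄ p₁) * (extD p₃ p₁ / extD p₃ p₂)

/-- A homeomorphism of `S̄ = S ∪ {∞}` is `d`-Möbius if it preserves the metric cross-ratio
of every quadruple of pairwise distinct points. -/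
def IsMobius {S : Type*} [MetricSpace S] (φ : OnePoint S → OnePoint S) : Prop :=
  ∀ p₁ p₂ p₃ p₄ : OnePoint S, [p₁, p₂, p₃, p₄].Pairwise (· ≠ ·) →
    crossRatio (φ p₁) (φ p₂) (φ p₃) (φ p₄) = crossRatio p₁ p₂ p₃ p₄

lemma extD_coe_coe' {S : Type*} [MetricSpace S] (p q : S) :
    extD (↑p : OnePoint S) ↑q = dist p q := rfl

lemma extD_infty_left' {S : Type*} [MetricSpace S] (x : OnePoint S) : extD ∞ x = 1 := by
  cases x <;> rfl

lemma extD_coe_infty' {S : Type*} [MetricSpace S] (p : S) : extD (↑p : OnePoint S) ∞ = 1 := rfl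

lemma mobius_step_lemma {S : Type*} [MetricSpace S]
    (φ : OnePoint S ≃ₜ OnePoint S) (hφ : IsMobius φ) (hfix : φ ∞ = ∞)
    {p q r p' q' r' : S} (hpq : p ≠ q) (hpr : p ≠ r) (hqr : q ≠ r)
    (hp : φ ↑p = ↑p') (hq : φ ↑q = ↑q') (hr : φ ↑r = ↑r') :
    dist q' p' / dist q p = dist r' p' / dist r p := by
  have hinj : ∀ {x y : S} {x' y' : S}, x ≠ y → φ ↑x = ↑x' → φ ↑y = ↑y' → x' ≠ y' := by
    intro x y x' y' hxy hx hy h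
    exact hxy (coe_eq_coe.mp (φ.injective (by rw [hx, hy, h])))
  have h := hφ ∞ ↑p ↑q ↑r (by
    simp [List.pairwise_cons, coe_eq_coe, hpq, hpr, hqr])
  rw [hfix, hp, hq, hr] at h
  simp only [crossRatio, extD_coe_coe', extD_infty_left', extD_coe_infty', div_one, one_div] at h
  have h1 : dist q' p' ≠ 0 := ne_of_gt (dist_pos.mpr (hinj hpq hp hq).symm)
  have h2 : dist q p ≠ 0 := ne_of_gt (dist_pos.mpr hpq.symm)
  have h3 : dist r' p' ≠ 0 := ne_of_gt (dist_pos.mpr (hinj hpr hp hr).symm)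
  have h4 : dist r p ≠ 0 := ne_of_gt (dist_pos.mpr hpr.symm)
  field_simp at h ⊢
  linarith [h]

/-- A `d`-Möbius homeomorphism of `S ∪ {∞}` fixing `∞` restricts to a similarity of `S`:
there is `K > 0` with `d(φ(p),φ(q)) = K·d(p,q)` for all `p,q ∈ S`. -/
theorem mobius_fixing_infty_is_similarity {S : Type*} [MetricSpace S]
    (hthree : ∃ p q r : S, p ≠ q ∧ q ≠ r ∧ p ≠ r)
    (φ : OnePoint S ≃ₜ OnePoint S) (hφ : IsMobius φ) (hfix : φ ∞ = ∞) :
    ∃ K : ℝ, 0 < K ∧ ∀ p q p' q' : S,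
      φ (↑p) = ↑p' → φ (↑q) = ↑q' → dist p' q' = K * dist p q := by
  obtain ⟨a, b, c, hab, hbc, hac⟩ := hthree
  have himg : ∀ x : S, ∃ x' : S, φ ↑x = ↑x' := by
    intro x
    have h : φ ↑x ≠ ∞ := by
      intro h
      exact coe_ne_infty x (φ.injective (by rw [h, hfix]))
    obtain ⟨y, hy⟩ := ne_infty_iff_exists.mp h
    exact ⟨y, hy.symm⟩
  have hinj : ∀ {x y : S} {x' y' : S}, x ≠ y → φ ↑x = ↑x' → φ ↑y = ↑y' → x' ≠ y' := by
    intro x y x' y' hxy hx hy h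
    exact hxy (coe_eq_coe.mp (φ.injective (by rw [hx, hy, h])))
  have hcong : ∀ {x : S} {x' y' : S}, φ ↑x = ↑x' → φ ↑x = ↑y' → x' = y' := by
    intro x x' y' hx hy
    exact coe_eq_coe.mp (hx.symm.trans hy)
  obtain ⟨a', ha'⟩ := himg a
  obtain ⟨b', hb'⟩ := himg b
  have hKpos : 0 < dist a' b' / dist a b :=
    div_pos (dist_pos.mpr (hinj hab ha' hb')) (dist_pos.mpr hab)
  refine ⟨dist a' b' / dist a b, hKpos, ?_⟩
  -- key ratio claim for distinct points
  have key : ∀ p q p' q' : S, p ≠ q → φ ↑p = ↑p' → φ ↑q = ↑q' →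
      dist p' q' / dist p q = dist a' b' / dist a b := by
    intro p q p' q' hpq hp hq
    have base : ∀ x x' : S, a ≠ x → φ ↑x = ↑x' →
        dist x' a' / dist x a = dist a' b' / dist a b := by
      intro x x' hax hx
      by_cases hxb : x = b
      · have hx' : x' = b' := by rw [hxb] at hx; exact hcong hx hb'
        rw [hx', hxb, dist_comm b' a', dist_comm b a]
      · have h := mobius_step_lemma φ hφ hfix hax hab hxb ha' hx hb'
        rw [h, dist_comm b' a', dist_comm b a]
    by_cases hpa : p = a
    · have hp' : p' = a' := by rw [hpa] at hp; exact hcong hp ha'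
      rw [hp', hpa]
      by_cases hqb : q = b
      · have hq' : q' = b' := by rw [hqb] at hq; exact hcong hq hb'
        rw [hq', hqb]
      · have haq : a ≠ q := by rw [hpa] at hpq; exact hpq
        have h := mobius_step_lemma φ hφ hfix haq hab hqb ha' hq hb'
        rw [dist_comm a' q', dist_comm a q, h, dist_comm b' a', dist_comm b a]
    · by_cases hqa : q = a
      · have hq' : q' = a' := by rw [hqa] at hq; exact hcong hq ha'
        rw [hq', hqa]
        exact base p p' (Ne.symm hpa) hp
      · have h1 := mobius_step_lemma φ hφ hfix hpq hpa hqa hp hq ha'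
        have h2 := base p p' (Ne.symm hpa) hp
        rw [dist_comm p' q', dist_comm p q, h1, dist_comm a' p', dist_comm a p]
        exact h2
  intro p q p' q' hp hq
  by_cases hpq : p = q
  · subst hpq
    rw [hcong hp hq]
    simp
  · have := key p q p' q' hpq hp hq
    have hd : dist p q ≠ 0 := ne_of_gt (dist_pos.mpr hpq)
    field_simp at this
    rw [this]
    ring
end

section
/- Let (S,d) be a metric space with remote point ∞, let o ∈ S, and let φ be a d-Möbius map of S ∪ {∞} with φ² = id and φ(∞) = o (hence φ(o) = ∞). Then there exists β > 0 such that d(o,p)·d(o,φ(p)) = β² for every p ∈ S \ {o}, and moreover d(φ(p),φ(q)) = β²·d(p,q)/(d(o,p)·d(o,q)) for all p,q ∈ S \ {o}. -/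
open OnePoint

/-!
Cross-ratios of quadruples containing `∞` involve only three distances. Applying this to
`(∞, o, p, q) ↦ (o, ∞, φ p, φ q)` shows that `d(o,p)·d(o,φ p)` does not depend on `p`, and
applying it to `(∞, p, q, o) ↦ (o, φ p, φ q, ∞)` gives
`d(φ p, φ q)·d(o,p) = d(p,q)·d(o,φ q)`, which together with the first identity is the
distortion formula.
-/

namespace OnePoint

variable {S : Type*} [MetricSpace S]

theorem crossRatio_infty_coe_coe_coe (a b c : S) :
    crossRatio ∞ (a : OnePoint S) b c = dist c a / dist b a := by
  simp [crossRatio, extD, div_eq_mul_inv]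

theorem crossRatio_coe_infty_coe_coe (a b c : S) :
    crossRatio (a : OnePoint S) ∞ b c = dist b a / dist c a := by
  simp [crossRatio, extD, div_eq_mul_inv, mul_comm]

theorem crossRatio_coe_coe_coe_infty (a b c : S) :
    crossRatio (a : OnePoint S) b c ∞ = dist c a / dist c b := by
  simp [crossRatio, extD, div_eq_mul_inv]

end OnePoint

section Involution

variable {S : Type*} {φ : OnePoint S → OnePoint S} {o : S}

theorem OnePoint.pairwise_ne_infty_coe_coe_coe {a b c : S} (hab : a ≠ b) (hac : a ≠ c)
    (hbc : b ≠ c) : [(∞ : OnePoint S), a, b, c].Pairwise (· ≠ ·) := by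
  simp [hab, hac, hbc, eq_comm (a := (∞ : OnePoint S))]

theorem Function.Involutive.map_coe_ne_infty (hinv : Function.Involutive φ)
    (hinfty : φ ∞ = o) {p : S} (hp : p ≠ o) : φ p ≠ ∞ := by
  intro h
  apply hp
  simpa [h, hinfty] using (hinv p).symm

theorem Function.Involutive.ne_of_map_coe_eq (hinv : Function.Involutive φ)
    (hinfty : φ ∞ = o) {p p' : S} (hp : p ≠ o) (hpp' : φ p = p') : p' ≠ o := by
  rintro rfl
  have := hinv p
  rw [hpp', ← hinfty, hinv] at this
  exact coe_ne_infty p this.symm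

end Involution

namespace IsMobius

variable {S : Type*} [MetricSpace S] {φ : OnePoint S → OnePoint S} {o : S}

theorem dist_mul_dist_map_eq (hφ : IsMobius φ) (hinv : Function.Involutive φ)
    (hinfty : φ ∞ = o) {p q p' q' : S} (hp : p ≠ o) (hq : q ≠ o)
    (hpp' : φ p = p') (hqq' : φ q = q') :
    dist o p * dist o p' = dist o q * dist o q' := by
  rcases eq_or_ne p q with rfl | hpq
  · rw [coe_injective (hpp'.symm.trans hqq')]
  have hφo : φ o = ∞ := hinfty ▸ hinv ∞
  have h := hφ ∞ o p q (pairwise_ne_infty_coe_coe_coe hp.symm hq.symm hpq)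
  rw [hinfty, hφo, hpp', hqq', crossRatio_coe_infty_coe_coe,
    crossRatio_infty_coe_coe_coe] at h
  have hpo : dist p o ≠ 0 := dist_ne_zero.mpr hp
  have hq'o : dist q' o ≠ 0 := dist_ne_zero.mpr (hinv.ne_of_map_coe_eq hinfty hq hqq')
  rw [div_eq_div_iff hq'o hpo] at h
  simp only [dist_comm o]
  linarith

theorem dist_map_mul_dist_eq (hφ : IsMobius φ) (hinv : Function.Involutive φ)
    (hinfty : φ ∞ = o) {p q p' q' : S} (hp : p ≠ o) (hq : q ≠ o)
    (hpp' : φ p = p') (hqq' : φ q = q') :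
    dist p' q' * dist o p = dist p q * dist o q' := by
  rcases eq_or_ne p q with rfl | hpq
  · rw [coe_injective (hpp'.symm.trans hqq'), dist_self, dist_self, zero_mul, zero_mul]
  have hφo : φ o = ∞ := hinfty ▸ hinv ∞
  have hp'q' : p' ≠ q' := by
    rintro rfl
    exact hpq (coe_injective (hinv.injective (hpp'.trans hqq'.symm)))
  have h := hφ ∞ p q o (pairwise_ne_infty_coe_coe_coe hpq hp hq)
  rw [hinfty, hφo, hpp', hqq', crossRatio_coe_coe_coe_infty,
    crossRatio_infty_coe_coe_coe] at h
  rw [div_eq_div_iff (dist_ne_zero.mpr hp'q'.symm) (dist_ne_zero.mpr hpq.symm)] at h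
  simp only [dist_comm q', dist_comm q p, dist_comm o p] at h ⊢
  linarith

theorem exists_pos_forall_dist_mul_dist_map_eq (hφ : IsMobius φ)
    (hinv : Function.Involutive φ) (hinfty : φ ∞ = o) :
    ∃ c > 0, ∀ p p' : S, p ≠ o → φ p = p' → dist o p * dist o p' = c := by
  by_cases hS : ∃ a : S, a ≠ o
  · obtain ⟨a, hao⟩ := hS
    obtain ⟨a', haa'⟩ := ne_infty_iff_exists.mp (hinv.map_coe_ne_infty hinfty hao)
    have ha'o := hinv.ne_of_map_coe_eq hinfty hao haa'.symm
    refine ⟨dist o a * dist o a', mul_pos (dist_pos.mpr hao.symm) (dist_pos.mpr ha'o.symm),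
      fun p p' hp hpp' => hφ.dist_mul_dist_map_eq hinv hinfty hp hao hpp' haa'.symm⟩
  · exact ⟨1, one_pos, fun p _ hp _ => absurd ⟨p, hp⟩ hS⟩

end IsMobius

theorem mobius_inversion_properties_general {S : Type*} [MetricSpace S] (o : S)
    (φ : OnePoint S ≃ₜ OnePoint S) (hφ : IsMobius φ)
    (hinv : ∀ x : OnePoint S, φ (φ x) = x) (hinfty : φ ∞ = ↑o) :
    ∃ β : ℝ, 0 < β ∧
      (∀ p p' : S, p ≠ o → φ (↑p) = ↑p' → dist o p * dist o p' = β ^ 2) ∧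
      (∀ p q p' q' : S, p ≠ o → q ≠ o → φ (↑p) = ↑p' → φ (↑q) = ↑q' →
        dist p' q' = β ^ 2 * dist p q / (dist o p * dist o q)) := by
  obtain ⟨c, hc, hconst⟩ := hφ.exists_pos_forall_dist_mul_dist_map_eq hinv hinfty
  refine ⟨√c, Real.sqrt_pos.mpr hc, ?_, ?_⟩ <;> rw [Real.sq_sqrt hc.le]
  · exact hconst
  · intro p q p' q' hp hq hpp' hqq'
    have hdist := hφ.dist_map_mul_dist_eq hinv hinfty hp hq hpp' hqq'
    rw [← hconst q q' hq hqq', eq_div_iff (mul_pos (dist_pos.mpr hp.symm)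
      (dist_pos.mpr hq.symm)).ne']
    linear_combination dist o q * hdist

/-- Let `φ` be a `d`-Möbius map of `S ∪ {∞}` with `φ² = id` and `φ(∞) = o` (hence
`φ(o) = ∞`). Then there is `β > 0` with `d(o,p)·d(o,φ(p)) = β²` for every `p ∈ S \ {o}`,
and `d(φ(p),φ(q)) = β²·d(p,q)/(d(o,p)·d(o,q))` for all `p,q ∈ S \ {o}`. -/
theorem mobius_inversion_properties {S : Type*} [MetricSpace S] (o : S)
    (htwo : ∃ p q : S, p ≠ q ∧ p ≠ o ∧ q ≠ o)
    (φ : OnePoint S ≃ₜ OnePoint S) (hφ : IsMobius φ)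
    (hinv : ∀ x : OnePoint S, φ (φ x) = x) (hinfty : φ ∞ = ↑o) :
    ∃ β : ℝ, 0 < β ∧
      (∀ p p' : S, p ≠ o → φ (↑p) = ↑p' → dist o p * dist o p' = β ^ 2) ∧
      (∀ p q p' q' : S, p ≠ o → q ≠ o → φ (↑p) = ↑p' → φ (↑q) = ↑q' →
        dist p' q' = β ^ 2 * dist p q / (dist o p * dist o q)) :=
  mobius_inversion_properties_general o φ hφ hinv hinfty
end

section
/- With the hypotheses of the preceding statement and additionally d(o,(e₁,0)) = d(o,(0,f₁)) =: β (condition (Eq)), one has d = β·d_𝔥^α, i.e. d(p,q) = β·d_𝔥(p,q)^α for all p,q in the Heisenberg group. -/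
/-! An abstract model of the `K`-Heisenberg group `𝔥 = K^{n-1} × Im(K)`: `V` plays the role
of `K^{n-1}`, `W` that of `Im(K)`, and `ω` is the (alternating bilinear) symplectic form. -/

section Heisenberg

variable {V W : Type*} [NormedAddCommGroup V] [NormedSpace ℝ V]
  [NormedAddCommGroup W] [NormedSpace ℝ W]

/-- The Heisenberg product `(ζ,v)*(ζ',v') = (ζ+ζ', v+v'+2ω(ζ,ζ'))`. -/
def hMul (ω : V →ₗ[ℝ] V →ₗ[ℝ] W) (p q : V × W) : V × W :=
  (p.1 + q.1, p.2 + q.2 + (2 : ℝ) • ω p.1 q.1)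

/-- The Heisenberg inverse `(ζ,v)⁻¹ = (-ζ,-v)`. -/
def hInv (p : V × W) : V × W := (-p.1, -p.2)

/-- The Korányi gauge `|(ζ,v)| = (‖ζ‖⁴ + |v|²)^{1/4}`. -/
noncomputable def korGauge (p : V × W) : ℝ := (‖p.1‖ ^ 4 + ‖p.2‖ ^ 2) ^ ((1 : ℝ) / 4)

/-- The Korányi metric `d_𝔥(p,q) = |q⁻¹ * p|`. -/
noncomputable def dKor (ω : V →ₗ[ℝ] V →ₗ[ℝ] W) (p q : V × W) : ℝ :=
  korGauge (hMul ω (hInv q) p)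

/-- The Heisenberg dilation `D_δ(ζ,v) = (δζ, δ²v)`. -/
def dilH (δ : ℝ) (p : V × W) : V × W := (δ • p.1, (δ ^ 2) • p.2)

end Heisenberg

/-! On the Heisenberg group a left-invariant, symmetric `d` is determined by its gauge
`N p = d(o,p)`. Rotation invariance and homogeneity under dilations give
`N(ζ,0) = ‖ζ‖^α N(e₁,0)` and `N(0,v) = ‖v‖^{α/2} N(0,f₁)`; under (Eq) both constants are `β`,
and then (G) reassembles `N(ζ,v) = β (‖ζ‖⁴ + ‖v‖²)^{α/4} = β |(ζ,v)|^α`. -/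

section Heisenberg

variable {V W : Type*} [NormedAddCommGroup V] [NormedSpace ℝ V]
  [NormedAddCommGroup W] [NormedSpace ℝ W]

theorem hMul_hInv_self {ω : V →ₗ[ℝ] V →ₗ[ℝ] W} (hω : ∀ ζ : V, ω ζ ζ = 0) (q : V × W) :
    hMul ω (hInv q) q = 0 := by
  simp [hMul, hInv, hω, Prod.ext_iff]

theorem dilH_zero (δ : ℝ) : dilH δ (0 : V × W) = 0 := by
  simp [dilH]

theorem eq_apply_zero_hMul_hInv {ω : V →ₗ[ℝ] V →ₗ[ℝ] W} (hω : ∀ ζ : V, ω ζ ζ = 0)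
    {d : V × W → V × W → ℝ} (hsymm : ∀ p q, d p q = d q p)
    (hleft : ∀ r p q, d (hMul ω r p) (hMul ω r q) = d p q) (p q : V × W) :
    d p q = d 0 (hMul ω (hInv q) p) := by
  rw [← hleft (hInv q) p q, hMul_hInv_self hω, hsymm]

variable {N : V × W → ℝ} {α : ℝ}

theorem apply_horizontal_eq_norm_rpow_mul (hα : α ≠ 0) (hN0 : N 0 = 0)
    (hdil : ∀ δ : ℝ, 0 < δ → ∀ p, N (dilH δ p) = δ ^ α * N p)
    (hrot : ∀ ζ ζ' : V, ‖ζ‖ = ‖ζ'‖ → N (ζ, 0) = N (ζ', 0))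
    {e : V} (he : ‖e‖ = 1) (ζ : V) :
    N (ζ, 0) = ‖ζ‖ ^ α * N (e, 0) := by
  rcases eq_or_ne ζ 0 with rfl | hζ
  · rw [norm_zero, Real.zero_rpow hα, zero_mul]
    exact hN0
  have hn : 0 < ‖ζ‖ := norm_pos_iff.mpr hζ
  have hrescale : dilH ‖ζ‖ (e, (0 : W)) = (‖ζ‖ • e, 0) := by simp [dilH]
  rw [hrot ζ (‖ζ‖ • e) (by rw [norm_smul, he, norm_norm, mul_one]), ← hrescale,
    hdil _ hn]

theorem apply_vertical_eq_norm_rpow_mul (hα : α ≠ 0) (hN0 : N 0 = 0)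
    (hdil : ∀ δ : ℝ, 0 < δ → ∀ p, N (dilH δ p) = δ ^ α * N p)
    (hrot : ∀ v v' : W, ‖v‖ = ‖v'‖ → N (0, v) = N (0, v'))
    {f : W} (hf : ‖f‖ = 1) (v : W) :
    N (0, v) = ‖v‖ ^ (α / 2) * N (0, f) := by
  rcases eq_or_ne v 0 with rfl | hv
  · rw [norm_zero, Real.zero_rpow (div_ne_zero hα two_ne_zero), zero_mul]
    exact hN0
  have hn : 0 < ‖v‖ := norm_pos_iff.mpr hv
  have hrescale : dilH √‖v‖ ((0 : V), f) = (0, ‖v‖ • f) := by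
    simp [dilH, Real.sq_sqrt hn.le]
  have hsqrt_rpow : √‖v‖ ^ α = ‖v‖ ^ (α / 2) := by
    rw [Real.sqrt_eq_rpow, ← Real.rpow_mul hn.le, one_div_mul_eq_div]
  rw [hrot v (‖v‖ • f) (by rw [norm_smul, hf, norm_norm, mul_one]), ← hrescale,
    hdil _ (Real.sqrt_pos.mpr hn), hsqrt_rpow]

end Heisenberg

theorem rpow_mul_rpow_div {x y β : ℝ} (hx : 0 ≤ x) (hβ : 0 ≤ β) (hy : y ≠ 0) (c k : ℝ) :
    (x ^ (c * y) * β) ^ (k / y) = x ^ (k * c) * β ^ (k / y) := by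
  rw [Real.mul_rpow (Real.rpow_nonneg hx _) hβ, ← Real.rpow_mul hx]
  congr 2
  field_simp

theorem rpow_sum_eq_mul_korGauge_rpow {V W : Type*} [NormedAddCommGroup V] [NormedAddCommGroup W]
    {α β : ℝ} (hα : α ≠ 0) (hβ : 0 ≤ β) (p : V × W) :
    ((‖p.1‖ ^ α * β) ^ (4 / α) + (‖p.2‖ ^ (α / 2) * β) ^ (4 / α)) ^ (α / 4) =
      β * korGauge p ^ α := by
  have h₁ := rpow_mul_rpow_div (norm_nonneg p.1) hβ hα 1 4
  have h₂ := rpow_mul_rpow_div (norm_nonneg p.2) hβ hα (1 / 2) 4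
  rw [one_mul] at h₁
  rw [one_div_mul_eq_div] at h₂
  have hexp : 4 / α * (α / 4) = 1 := by field_simp
  rw [h₁, h₂, ← add_mul, Real.mul_rpow (by positivity) (by positivity), ← Real.rpow_mul hβ, hexp,
    Real.rpow_one, korGauge, ← Real.rpow_mul (by positivity), one_div_mul_eq_div, mul_comm]
  norm_num

theorem conditions_G_Eq_imply_power_of_Koranyi_general
    {V W : Type*} [NormedAddCommGroup V] [NormedSpace ℝ V]
    [NormedAddCommGroup W] [NormedSpace ℝ W]
    (ω : V →ₗ[ℝ] V →ₗ[ℝ] W) (hω : ∀ ζ : V, ω ζ ζ = 0)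
    (e₁ : V) (f₁ : W) (he₁ : ‖e₁‖ = 1) (hf₁ : ‖f₁‖ = 1)
    (d : V × W → V × W → ℝ) (α : ℝ) (hα0 : 0 < α)
    -- `d` is a metric:
    (hself : ∀ p, d p p = 0) (hpos : ∀ p q, p ≠ q → 0 < d p q)
    (hsymm : ∀ p q, d p q = d q p)
    -- invariance under left translations:
    (hleft : ∀ r p q, d (hMul ω r p) (hMul ω r q) = d p q)
    -- scaling under dilations:
    (hdil : ∀ δ : ℝ, 0 < δ → ∀ p q, d (dilH δ p) (dilH δ q) = δ ^ α * d p q)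
    -- rotation invariance:
    (hrotV : ∀ ζ ζ' : V, ‖ζ‖ = ‖ζ'‖ → d 0 (ζ, 0) = d 0 (ζ', 0))
    (hrotW : ∀ v v' : W, ‖v‖ = ‖v'‖ → d 0 ((0 : V), v) = d 0 ((0 : V), v'))
    -- condition (G):
    (hG : ∀ p : V × W, d 0 p =
      (d 0 (p.1, (0 : W)) ^ (4 / α) + d 0 ((0 : V), p.2) ^ (4 / α)) ^ (α / 4))
    -- condition (Eq):
    (hEq : d 0 (e₁, (0 : W)) = d 0 ((0 : V), f₁)) :
    ∀ p q : V × W, d p q = d 0 (e₁, (0 : W)) * dKor ω p q ^ α := by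
  intro p q
  have hdil₀ : ∀ δ : ℝ, 0 < δ → ∀ p, d 0 (dilH δ p) = δ ^ α * d 0 p := fun δ hδ p => by
    simpa only [dilH_zero] using hdil δ hδ 0 p
  have hβ : 0 ≤ d 0 (e₁, (0 : W)) := by
    have he₁0 : e₁ ≠ 0 := norm_ne_zero_iff.mp (he₁ ▸ one_ne_zero)
    exact (hpos _ _ fun h => he₁0 (congrArg Prod.fst h).symm).le
  have hgauge (r : V × W) : d 0 r = d 0 (e₁, (0 : W)) * korGauge r ^ α := by
    rw [hG r, apply_horizontal_eq_norm_rpow_mul hα0.ne' (hself 0) hdil₀ hrotV he₁,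
      apply_vertical_eq_norm_rpow_mul hα0.ne' (hself 0) hdil₀ hrotW hf₁, ← hEq,
      rpow_sum_eq_mul_korGauge_rpow hα0.ne' hβ]
  rw [eq_apply_zero_hMul_hInv hω hsymm hleft, hgauge, dKor]

/-- If a left-invariant, dilation-scaling, rotation invariant metric `d` on the Heisenberg
group satisfies condition (G) and moreover condition (Eq): `d(o,(e₁,0)) = d(o,(0,f₁)) =: β`,
then `d = β·d_𝔥^α`. -/
theorem conditions_G_Eq_imply_power_of_Koranyi
    {V W : Type*} [NormedAddCommGroup V] [NormedSpace ℝ V]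
    [NormedAddCommGroup W] [NormedSpace ℝ W]
    (ω : V →ₗ[ℝ] V →ₗ[ℝ] W) (hω : ∀ ζ : V, ω ζ ζ = 0)
    (e₁ : V) (f₁ : W) (he₁ : ‖e₁‖ = 1) (hf₁ : ‖f₁‖ = 1)
    (d : V × W → V × W → ℝ) (α : ℝ) (hα0 : 0 < α) (hα1 : α ≤ 1)
    -- `d` is a metric:
    (hself : ∀ p, d p p = 0) (hpos : ∀ p q, p ≠ q → 0 < d p q)
    (hsymm : ∀ p q, d p q = d q p) (htri : ∀ p q r, d p r ≤ d p q + d q r)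
    -- invariance under left translations:
    (hleft : ∀ r p q, d (hMul ω r p) (hMul ω r q) = d p q)
    -- scaling under dilations:
    (hdil : ∀ δ : ℝ, 0 < δ → ∀ p q, d (dilH δ p) (dilH δ q) = δ ^ α * d p q)
    -- rotation invariance:
    (hrotV : ∀ ζ ζ' : V, ‖ζ‖ = ‖ζ'‖ → d 0 (ζ, 0) = d 0 (ζ', 0))
    (hrotW : ∀ v v' : W, ‖v‖ = ‖v'‖ → d 0 ((0 : V), v) = d 0 ((0 : V), v'))
    -- condition (G):
    (hG : ∀ p : V × W, d 0 p =
      (d 0 (p.1, (0 : W)) ^ (4 / α) + d 0 ((0 : V), p.2) ^ (4 / α)) ^ (α / 4))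
    -- condition (Eq):
    (hEq : d 0 (e₁, (0 : W)) = d 0 ((0 : V), f₁)) :
    ∀ p q : V × W, d p q = d 0 (e₁, (0 : W)) * dKor ω p q ^ α :=
  conditions_G_Eq_imply_power_of_Koranyi_general ω hω e₁ f₁ he₁ hf₁ d α hα0 hself hpos hsymm hleft
    hdil hrotV hrotW hG hEq
end

section
/- Suppose d is a metric on the Heisenberg group invariant under left translations, with dilation scaling d(D_δ p, D_δ q) = δ^α d(p,q) for α ∈ (0,1], and rotation invariant. Then with β₁ = max{d(o,(e₁,0)), d(o,(0,f₁))}, for every point p = (ζ,v), d(p,o) ≤ β₁·2^{(4-α)/4}·d_𝔥(p,o)^α, where d_𝔥 is the Korányi metric. -/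
lemma key_nnreal (x y : NNReal) {q : ℝ} (hq : 1 ≤ q) :
    x + y ≤ 2 ^ ((q - 1) / q) * (x ^ q + y ^ q) ^ (1 / q) := by
  have hq0 : (0:ℝ) < q := lt_of_lt_of_le one_pos hq
  have h := NNReal.rpow_add_le_mul_rpow_add_rpow x y hq
  have h2 := NNReal.rpow_le_rpow h (le_of_lt (one_div_pos.mpr hq0))
  rwa [NNReal.mul_rpow, ← NNReal.rpow_mul, ← NNReal.rpow_mul, mul_one_div,
    mul_one_div, div_self hq0.ne', NNReal.rpow_one] at h2

lemma key_real {x y : ℝ} (hx : 0 ≤ x) (hy : 0 ≤ y) {q : ℝ} (hq : 1 ≤ q) :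
    x + y ≤ 2 ^ ((q - 1) / q) * (x ^ q + y ^ q) ^ (1 / q) := by
  lift x to NNReal using hx
  lift y to NNReal using hy
  have h2 := (NNReal.coe_le_coe).mpr (key_nnreal x y hq)
  push_cast [NNReal.coe_rpow] at h2
  convert h2 using 3

/-- If a metric `d` on the Heisenberg group is left-invariant, scales by `δ^α`
(`α ∈ (0,1]`) under dilations and is rotation invariant, then with
`β₁ = max{d(o,(e₁,0)), d(o,(0,f₁))}` one has
`d(p,o) ≤ β₁·2^{(4-α)/4}·d_𝔥(p,o)^α` for every `p = (ζ,v)`. -/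
theorem hoelder_upper_bound
    {V W : Type*} [NormedAddCommGroup V] [NormedSpace ℝ V]
    [NormedAddCommGroup W] [NormedSpace ℝ W]
    (ω : V →ₗ[ℝ] V →ₗ[ℝ] W) (hω : ∀ ζ : V, ω ζ ζ = 0)
    (e₁ : V) (f₁ : W) (he₁ : ‖e₁‖ = 1) (hf₁ : ‖f₁‖ = 1)
    (d : V × W → V × W → ℝ) (α : ℝ) (hα0 : 0 < α) (hα1 : α ≤ 1)
    -- `d` is a metric:
    (hself : ∀ p, d p p = 0) (hpos : ∀ p q, p ≠ q → 0 < d p q)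
    (hsymm : ∀ p q, d p q = d q p) (htri : ∀ p q r, d p r ≤ d p q + d q r)
    -- invariance under left translations:
    (hleft : ∀ r p q, d (hMul ω r p) (hMul ω r q) = d p q)
    -- scaling under dilations:
    (hdil : ∀ δ : ℝ, 0 < δ → ∀ p q, d (dilH δ p) (dilH δ q) = δ ^ α * d p q)
    -- rotation invariance:
    (hrotV : ∀ ζ ζ' : V, ‖ζ‖ = ‖ζ'‖ → d 0 (ζ, 0) = d 0 (ζ', 0))
    (hrotW : ∀ v v' : W, ‖v‖ = ‖v'‖ → d 0 ((0 : V), v) = d 0 ((0 : V), v')) :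
    ∀ p : V × W, d p 0 ≤
      max (d 0 (e₁, (0 : W))) (d 0 ((0 : V), f₁)) * (2 : ℝ) ^ ((4 - α) / 4) *
        dKor ω p 0 ^ α := by
  intro p
  obtain ⟨ζ, v⟩ := p
  set β := max (d 0 (e₁, (0 : W))) (d 0 ((0 : V), f₁)) with hβ
  have hzero : ((0 : V), (0 : W)) = (0 : V × W) := rfl
  have hβa : 0 < d 0 (e₁, (0 : W)) := by
    apply hpos
    intro h
    have : e₁ = 0 := by simpa using congrArg Prod.fst h.symm
    simp [this] at he₁
  have hβ0 : 0 ≤ β := le_trans hβa.le (le_max_left _ _)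
  -- Step A : d 0 (ζ,0) = ‖ζ‖^α * d 0 (e₁,0)
  have hA : ∀ ζ : V, d 0 ((ζ, 0) : V × W) = ‖ζ‖ ^ α * d 0 (e₁, (0 : W)) := by
    intro ζ
    rcases eq_or_ne ζ 0 with h | h
    · rw [h, hzero, hself, norm_zero, Real.zero_rpow hα0.ne', zero_mul]
    · have hδ : (0 : ℝ) < ‖ζ‖ := norm_pos_iff.mpr h
      have h1 := hdil ‖ζ‖ hδ 0 ((‖ζ‖⁻¹ • ζ, 0) : V × W)
      have e0 : dilH ‖ζ‖ (0 : V × W) = 0 := by simp [dilH]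
      have e1 : dilH ‖ζ‖ ((‖ζ‖⁻¹ • ζ, 0) : V × W) = (ζ, 0) := by
        simp [dilH, smul_smul, mul_inv_cancel₀ hδ.ne']
      rw [e0, e1] at h1
      rw [h1, hrotV (‖ζ‖⁻¹ • ζ) e₁ (by
        rw [norm_smul, norm_inv, norm_norm, inv_mul_cancel₀ hδ.ne', he₁])]
  -- Step B : d 0 (0,v) = (√‖v‖)^α * d 0 (0,f₁)
  have hB : ∀ v : W, d 0 (((0 : V), v) : V × W)
      = Real.sqrt ‖v‖ ^ α * d 0 ((0 : V), f₁) := by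
    intro v
    rcases eq_or_ne v 0 with h | h
    · rw [h, hzero, hself, norm_zero, Real.sqrt_zero, Real.zero_rpow hα0.ne', zero_mul]
    · have hv : (0 : ℝ) < ‖v‖ := norm_pos_iff.mpr h
      have hδ : (0 : ℝ) < Real.sqrt ‖v‖ := Real.sqrt_pos.mpr hv
      have h1 := hdil _ hδ 0 (((0 : V), ‖v‖⁻¹ • v) : V × W)
      have e0 : dilH (Real.sqrt ‖v‖) (0 : V × W) = 0 := by simp [dilH]
      have e1 : dilH (Real.sqrt ‖v‖) (((0 : V), ‖v‖⁻¹ • v) : V × W) = ((0 : V), v) := by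
        simp [dilH, smul_smul, Real.sq_sqrt hv.le, mul_inv_cancel₀ hv.ne']
      rw [e0, e1] at h1
      rw [h1, hrotW (‖v‖⁻¹ • v) f₁ (by
        rw [norm_smul, norm_inv, norm_norm, inv_mul_cancel₀ hv.ne', hf₁])]
  -- triangle inequality
  have htr : d ((ζ, v) : V × W) 0 ≤ d 0 ((ζ, 0) : V × W) + d 0 (((0 : V), v) : V × W) := by
    have h1 := htri ((ζ, v) : V × W) (((0 : V), v) : V × W) 0
    have h2 : d ((ζ, v) : V × W) (((0 : V), v) : V × W) = d ((ζ, 0) : V × W) 0 := by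
      have := hleft (((0 : V), v) : V × W) ((ζ, 0) : V × W) 0
      have eA : hMul ω (((0 : V), v) : V × W) ((ζ, 0) : V × W) = (ζ, v) := by
        simp [hMul]
      have eB : hMul ω (((0 : V), v) : V × W) 0 = ((0 : V), v) := by
        simp [hMul]
      rw [eA, eB] at this
      exact this
    calc d ((ζ, v) : V × W) 0 ≤ d ((ζ, v) : V × W) (((0 : V), v) : V × W)
          + d (((0 : V), v) : V × W) 0 := h1
      _ = d 0 ((ζ, 0) : V × W) + d 0 (((0 : V), v) : V × W) := by
          rw [h2, hsymm ((ζ, 0) : V × W) 0, hsymm (((0 : V), v) : V × W) 0]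
  -- the Korányi gauge of p
  have hK : dKor ω ((ζ, v) : V × W) 0 = (‖ζ‖ ^ 4 + ‖v‖ ^ 2) ^ ((1 : ℝ) / 4) := by
    have : hMul ω (hInv (0 : V × W)) ((ζ, v) : V × W) = (ζ, v) := by
      simp [hMul, hInv]
    rw [dKor, this, korGauge]
  -- key power-mean inequality
  set x := ‖ζ‖ ^ α with hx
  set y := Real.sqrt ‖v‖ ^ α with hy
  have hx0 : 0 ≤ x := Real.rpow_nonneg (norm_nonneg _) _
  have hy0 : 0 ≤ y := Real.rpow_nonneg (Real.sqrt_nonneg _) _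
  have hq1 : (1 : ℝ) ≤ 4 / α := by
    rw [le_div_iff₀ hα0]; linarith
  have hkey := key_real hx0 hy0 hq1
  have hxq : x ^ ((4 : ℝ) / α) = ‖ζ‖ ^ (4 : ℕ) := by
    rw [hx, ← Real.rpow_natCast ‖ζ‖ 4, ← Real.rpow_mul (norm_nonneg _),
      mul_div_cancel₀ _ hα0.ne']
    norm_num
  have hyq : y ^ ((4 : ℝ) / α) = ‖v‖ ^ (2 : ℕ) := by
    rw [hy, ← Real.rpow_mul (Real.sqrt_nonneg _), mul_div_cancel₀ _ hα0.ne']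
    rw [show ((4:ℝ)) = ((4:ℕ) : ℝ) by norm_num, Real.rpow_natCast,
      show (4 : ℕ) = 2 * 2 by norm_num, pow_mul, Real.sq_sqrt (norm_nonneg _)]
  have hexp1 : ((4 : ℝ) / α - 1) / ((4 : ℝ) / α) = (4 - α) / 4 := by
    field_simp
  have hexp2 : (1 : ℝ) / ((4 : ℝ) / α) = α / 4 := by
    field_simp
  rw [hxq, hyq, hexp1, hexp2] at hkey
  -- putting everything together
  have hKα : dKor ω ((ζ, v) : V × W) 0 ^ α = (‖ζ‖ ^ 4 + ‖v‖ ^ 2) ^ (α / 4) := by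
    rw [hK, ← Real.rpow_mul (by positivity), one_div, inv_mul_eq_div]
  calc d ((ζ, v) : V × W) 0
      ≤ d 0 ((ζ, 0) : V × W) + d 0 (((0 : V), v) : V × W) := htr
    _ = x * d 0 (e₁, (0 : W)) + y * d 0 ((0 : V), f₁) := by rw [hA, hB]
    _ ≤ x * β + y * β := by
        gcongr
        · exact le_max_left _ _
        · exact le_max_right _ _
    _ = β * (x + y) := by ring
    _ ≤ β * (2 ^ ((4 - α) / 4) * (‖ζ‖ ^ 4 + ‖v‖ ^ 2) ^ (α / 4)) := by
        exact mul_le_mul_of_nonneg_left hkey hβ0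
    _ = β * 2 ^ ((4 - α) / 4) * dKor ω ((ζ, v) : V × W) 0 ^ α := by
        rw [hKα]; ring
end
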